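/- Removing a single process from the restriction set decreases the set consensus power by at most one: for every adversary A over a finite set Π, all S, Q ⊆ Π and every p ∈ Π, setcon(A|_{S,Q}) ≤ setcon(A|_{S∖{p},Q}) + 1. -/

import Mathlib

variable {α : Type*} [DecidableEq α]

/-- The restriction `A|_P` of an adversary `A` to a set of processes `P`:
the live sets of `A` that are contained in `P`. -/
def restrict (A : Finset (Finset α)) (P : Finset α) : Finset (Finset α) :=
  A.filter fun S => S ⊆ P

/-- The set consensus power `setcon A` of an adversary `A`:
`setcon ∅ = 0` and, for `A ≠ ∅`,
`setcon A = 1 + max_{S ∈ A} min_{a ∈ S} setcon (A|_{S \ {a}})`. -/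
def setcon (A : Finset (Finset α)) : ℕ :=
  if A = ∅ then 0
  else 1 + A.attach.sup fun S =>
    WithTop.untopD 0 (S.1.attach.image fun a => setcon (restrict A (S.1.erase a.1))).min
termination_by A.card
decreasing_by
  apply Finset.card_lt_card
  rw [Finset.ssubset_def]
  refine ⟨Finset.filter_subset _ _, fun hsub => ?_⟩
  have hmem := hsub S.2
  rw [restrict, Finset.mem_filter] at hmem
  exact Finset.notMem_erase a.1 S.1 (hmem.2 a.2)

/-- The restriction `A|_{P,Q}`: live sets of `A` contained in `P` that intersect `Q`. -/
def restrictTo (A : Finset (Finset α)) (P Q : Finset α) : Finset (Finset α) :=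
  (restrict A P).filter fun S => (S ∩ Q).Nonempty

/-- An adversary is fair if for all `P` and all `Q ⊆ P`,
`setcon (A|_{P,Q}) = min |Q| (setcon (A|_P))`. -/
def Fair (A : Finset (Finset α)) : Prop :=
  ∀ P Q : Finset α, Q ⊆ P →
    setcon (restrictTo A P Q) = min Q.card (setcon (restrict A P))

/-- `csize A`: the minimal cardinality of a hitting set of `A`, i.e. of a set
intersecting every live set of `A`. -/
noncomputable def csize (A : Finset (Finset α)) : ℕ :=
  sInf {k | ∃ H : Finset α, H.card = k ∧ ∀ S ∈ A, (H ∩ S).Nonempty}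


lemma mmin_le {β : Type*} [DecidableEq β] {s : Finset β} {g : β → ℕ} {a : β} (ha : a ∈ s) :
    WithTop.untopD 0 ((s.image g).min) ≤ g a := by
  have hne : (s.image g).Nonempty := ⟨g a, Finset.mem_image_of_mem _ ha⟩
  rw [← Finset.coe_min' hne, WithTop.untopD_coe]
  exact Finset.min'_le _ _ (Finset.mem_image_of_mem _ ha)

lemma mmin_mono {β : Type*} [DecidableEq β] {s : Finset β} {g g' : β → ℕ}
    (h : ∀ a ∈ s, g a ≤ g' a) :
    WithTop.untopD 0 ((s.image g).min) ≤ WithTop.untopD 0 ((s.image g').min) := by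
  rcases s.eq_empty_or_nonempty with rfl | hs
  · simp
  · have hne : (s.image g').Nonempty := hs.image _
    rw [← Finset.coe_min' hne, WithTop.untopD_coe]
    obtain ⟨a, ha, hga⟩ := Finset.mem_image.mp (Finset.min'_mem _ hne)
    calc WithTop.untopD 0 ((s.image g).min) ≤ g a := mmin_le ha
      _ ≤ g' a := h a ha
      _ = _ := hga

lemma restrict_card_lt {B : Finset (Finset α)} {T : Finset α} {a : α}
    (hT : T ∈ B) (haT : a ∈ T) : (restrict B (T.erase a)).card < B.card := by
  apply Finset.card_lt_card
  rw [Finset.ssubset_def]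
  refine ⟨Finset.filter_subset _ _, fun hsub => ?_⟩
  have hmem := hsub hT
  rw [restrict, Finset.mem_filter] at hmem
  exact Finset.notMem_erase a T (hmem.2 haT)

lemma setcon_eq (A : Finset (Finset α)) : setcon A =
    if A = ∅ then 0
    else 1 + A.attach.sup fun S =>
      WithTop.untopD 0 (S.1.attach.image fun a => setcon (restrict A (S.1.erase a.1))).min := by
  rw [setcon]

lemma mem_restrict {A : Finset (Finset α)} {P X : Finset α} :
    X ∈ restrict A P ↔ X ∈ A ∧ X ⊆ P := by
  rw [restrict, Finset.mem_filter]

lemma mem_restrictTo {A : Finset (Finset α)} {P Q X : Finset α} :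
    X ∈ restrictTo A P Q ↔ X ∈ A ∧ X ⊆ P ∧ (X ∩ Q).Nonempty := by
  rw [restrictTo, Finset.mem_filter, mem_restrict, and_assoc]

set_option maxHeartbeats 1000000 in
lemma setcon_mono_aux : ∀ (n : ℕ) (B A : Finset (Finset α)), B.card ≤ n → A ⊆ B →
    setcon A ≤ setcon B := by
  intro n
  induction n with
  | zero =>
    intro B A hcard h
    have : A = ∅ := Finset.subset_empty.mp
      ((Finset.card_eq_zero.mp (Nat.le_zero.mp hcard)) ▸ h)
    rw [this, setcon_eq]; simp
  | succ n ih =>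
    intro B A hcard h
    rcases eq_or_ne A ∅ with rfl | hA
    · rw [setcon_eq]; simp
    · have hB : B ≠ ∅ := fun hb => hA (Finset.subset_empty.mp (hb ▸ h))
      rw [setcon_eq A, setcon_eq B, if_neg hA, if_neg hB]
      refine Nat.add_le_add_left (Finset.sup_le fun T _ => ?_) 1
      have hTB : T.1 ∈ B := h T.2
      have hle := Finset.le_sup (s := B.attach) (f := fun S : {x // x ∈ B} =>
        WithTop.untopD 0 (S.1.attach.image fun a => setcon (restrict B (S.1.erase a.1))).min)
        (Finset.mem_attach _ ⟨T.1, hTB⟩)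
      refine le_trans ?_ hle
      simp only
      refine mmin_mono fun a _ => ?_
      have hlt := restrict_card_lt hTB a.2
      exact ih (restrict B (T.1.erase a.1)) (restrict A (T.1.erase a.1))
        (by omega)
        (fun X hX => by
          rw [mem_restrict] at hX ⊢
          exact ⟨h hX.1, hX.2⟩)

lemma setcon_mono (B A : Finset (Finset α)) (h : A ⊆ B) : setcon A ≤ setcon B :=
  setcon_mono_aux B.card B A le_rfl h

/-- removing a single process from the restriction set decreases the
set consensus power by at most one. -/
theorem setcon_restrictTo_erase [Fintype α] (A : Finset (Finset α))
    (hne : ∀ T ∈ A, T.Nonempty) (S Q : Finset α) (p : α) :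
    setcon (restrictTo A S Q) ≤ setcon (restrictTo A (S.erase p) Q) + 1 := by
  rcases eq_or_ne (restrictTo A S Q) ∅ with hB | hB
  · rw [setcon_eq, if_pos hB]; omega
  · rw [setcon_eq (restrictTo A S Q), if_neg hB, Nat.add_comm 1]
    refine Nat.add_le_add_right (Finset.sup_le fun T _ => ?_) 1
    have hTB : T.1 ∈ restrictTo A S Q := T.2
    rw [mem_restrictTo] at hTB
    obtain ⟨hTA, hTS, hTQ⟩ := hTB
    have key : ∀ a ∈ T.1, T.1.erase a ⊆ S.erase p →
        setcon (restrict (restrictTo A S Q) (T.1.erase a))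
          ≤ setcon (restrictTo A (S.erase p) Q) := by
      intro a ha hsub
      refine setcon_mono _ _ fun X hX => ?_
      rw [mem_restrict, mem_restrictTo] at hX
      rw [mem_restrictTo]
      exact ⟨hX.1.1, hX.2.trans hsub, hX.1.2.2⟩
    by_cases hp : p ∈ T.1
    · have h1 := mmin_le (s := T.1.attach)
        (g := fun a => setcon (restrict (restrictTo A S Q) (T.1.erase a.1)))
        (Finset.mem_attach _ ⟨p, hp⟩)
      refine le_trans h1 ?_
      exact key p hp (Finset.erase_subset_erase p hTS)
    · obtain ⟨a, ha⟩ := hne T.1 hTA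
      have h1 := mmin_le (s := T.1.attach)
        (g := fun a => setcon (restrict (restrictTo A S Q) (T.1.erase a.1)))
        (Finset.mem_attach _ ⟨a, ha⟩)
      refine le_trans h1 ?_
      refine key a ha fun x hx => Finset.mem_erase.mpr
        ⟨fun hxp => hp ?_, hTS (Finset.mem_of_mem_erase hx)⟩
      exact hxp ▸ Finset.mem_of_mem_erase hx
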